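/- Let ψ : ℝ^n \ {x₀} → ℝ (n ≥ 2) be given by ψ(x) = C₀ + C₁ ln |x − x₀|² for constants C₀, C₁ ∈ ℝ and x₀ ∈ ℝ^n. Then ψ satisfies the homogeneous cubic PDE ∂_kψ ∂_kψ ∂_{ij}ψ + ∂_kψ ∂_lψ ∂_{kl}ψ δ_{ij} = ∂_iψ ∂_{jk}ψ ∂_kψ + ∂_jψ ∂_{ik}ψ ∂_kψ on its domain. -/

import Mathlib

open Real

open Filter Topology

/-- First partial derivative `∂ᵢ f` on `ℝⁿ`. -/
noncomputable def pd {n : ℕ} (i : Fin n) (f : (Fin n → ℝ) → ℝ) (x : Fin n → ℝ) : ℝ :=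
  fderiv ℝ f x (Pi.single i 1)

/-- Second partial derivative `∂ᵢ∂ⱼ f`. -/
noncomputable def pd2 {n : ℕ} (i j : Fin n) (f : (Fin n → ℝ) → ℝ) (x : Fin n → ℝ) : ℝ :=
  pd i (pd j f) x

/-!
Write `a = x - x₀` and `S = |a|²`. A function of `S` has gradient `g = c a` and Hessian
`H = d I + e a aᵀ`, so `g` is an eigenvector of `H` with eigenvalue `d + e S`. Both sides of the
cubic PDE then reduce to multiples of `I` and `a aᵀ`, and they agree when the radial
eigenvalue `d + e S` is the negative of the tangential one `d`, i.e. `2 d + e S = 0`. For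
`ψ = C₀ + C₁ ln S` one has `d = 2 C₁ / S` and `e = -4 C₁ / S²`, which satisfy this.
-/

theorem cubic_identity_of_radial_derivatives {n : ℕ} (a g : Fin n → ℝ) (H : Fin n → Fin n → ℝ)
    (c d e : ℝ) (hg : ∀ k, g k = c * a k)
    (hH : ∀ k l, H k l = d * (if k = l then (1:ℝ) else 0) + e * a k * a l)
    (hde : 2 * d + e * ∑ k, a k ^ 2 = 0) (i j : Fin n) :
    (∑ k, g k * g k) * H i j
        + (∑ k, ∑ l, g k * g l * H k l) * (if i = j then (1:ℝ) else 0)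
      = g i * (∑ k, H j k * g k) + g j * (∑ k, H i k * g k) := by
  set S := ∑ k, a k ^ 2
  have hgg : ∑ k, g k * g k = c ^ 2 * S := by
    simp only [hg, S, Finset.mul_sum]
    exact Finset.sum_congr rfl fun k _ => by ring
  have hHg : ∀ m, ∑ k, H m k * g k = c * (d + e * S) * a m := by
    intro m
    calc ∑ k, H m k * g k
        = ∑ k, (if m = k then c * d * a k else 0) + c * e * a m * ∑ k, a k ^ 2 := by
          rw [Finset.mul_sum, ← Finset.sum_add_distrib]
          refine Finset.sum_congr rfl fun k _ => ?_
          rw [hH, hg]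
          split_ifs <;> ring
      _ = c * (d + e * S) * a m := by
          rw [Finset.sum_ite_eq, if_pos (Finset.mem_univ m)]
          ring
  have hgHg : ∑ k, ∑ l, g k * g l * H k l = c ^ 2 * (d + e * S) * S := by
    calc ∑ k, ∑ l, g k * g l * H k l = ∑ k, g k * ∑ l, H k l * g l := by
          simp only [Finset.mul_sum]
          exact Finset.sum_congr rfl fun k _ => Finset.sum_congr rfl fun l _ => by ring
      _ = c ^ 2 * (d + e * S) * S := by
          simp only [hHg]
          simp only [hg, S, Finset.mul_sum]
          exact Finset.sum_congr rfl fun k _ => by ring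
  rw [hgg, hgHg, hHg i, hHg j, hH i j, hg i, hg j]
  linear_combination ((if i = j then (1:ℝ) else 0) * c ^ 2 * S - c ^ 2 * a i * a j) * hde

theorem pd_eq_of_eventuallyEq_of_hasFDerivAt {n : ℕ} {f g : (Fin n → ℝ) → ℝ}
    {g' : (Fin n → ℝ) →L[ℝ] ℝ} {x : Fin n → ℝ} (hfg : f =ᶠ[𝓝 x] g) (hg : HasFDerivAt g g' x)
    (i : Fin n) : pd i f x = g' (Pi.single i 1) := by
  rw [pd, hfg.fderiv_eq, hg.fderiv]

noncomputable def sqDist {n : ℕ} (x₀ x : Fin n → ℝ) : ℝ := ∑ k, (x k - x₀ k) ^ 2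

section sqDist

variable {n : ℕ} {x₀ x : Fin n → ℝ}

theorem sqDist_pos (hx : x ≠ x₀) : 0 < sqDist x₀ x := by
  obtain ⟨k, hk⟩ := Function.ne_iff.mp hx
  have hk' : x k - x₀ k ≠ 0 := sub_ne_zero.mpr hk
  exact Finset.sum_pos' (fun k _ => sq_nonneg _) ⟨k, Finset.mem_univ k, by positivity⟩

variable (x₀ x) in
theorem hasFDerivAt_sqDist :
    HasFDerivAt (sqDist x₀)
      (∑ k, (2 * (x k - x₀ k)) • (ContinuousLinearMap.proj k : (Fin n → ℝ) →L[ℝ] ℝ)) x := by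
  refine HasFDerivAt.fun_sum fun k _ => ?_
  have hsq : HasDerivAt (fun t : ℝ => (t - x₀ k) ^ 2) (2 * (x k - x₀ k)) (x k) := by
    simpa using ((hasDerivAt_id (x k)).sub_const (x₀ k)).fun_pow 2
  exact hsq.comp_hasFDerivAt (f := fun y : Fin n → ℝ => y k) x (hasFDerivAt_apply k x)

theorem sum_smul_proj_single (c : Fin n → ℝ) (i : Fin n) :
    (∑ k, c k • (ContinuousLinearMap.proj k : (Fin n → ℝ) →L[ℝ] ℝ)) (Pi.single i 1) = c i := by
  simp [Pi.single_apply]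

end sqDist

section logSqDist

variable {n : ℕ} {x₀ x : Fin n → ℝ} {C₀ C₁ : ℝ} {ψ : (Fin n → ℝ) → ℝ}

theorem pd_of_eq_log_sqDist (hψ : ∀ y, y ≠ x₀ → ψ y = C₀ + C₁ * log (sqDist x₀ y))
    (hx : x ≠ x₀) (i : Fin n) :
    pd i ψ x = 2 * C₁ / sqDist x₀ x * (x i - x₀ i) := by
  have hS := (sqDist_pos hx).ne'
  have heq : ψ =ᶠ[𝓝 x] fun y => C₀ + C₁ * log (sqDist x₀ y) := by
    filter_upwards [isOpen_ne.mem_nhds hx] with y hy using hψ y hy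
  have hderiv := (((hasDerivAt_log hS).comp_hasFDerivAt x (hasFDerivAt_sqDist x₀ x)).const_mul
    C₁).const_add C₀
  rw [pd_eq_of_eventuallyEq_of_hasFDerivAt heq hderiv]
  simp only [smul_apply, sum_smul_proj_single, smul_eq_mul]
  field_simp

theorem pd2_of_eq_log_sqDist (hψ : ∀ y, y ≠ x₀ → ψ y = C₀ + C₁ * log (sqDist x₀ y))
    (hx : x ≠ x₀) (i j : Fin n) :
    pd2 i j ψ x = 2 * C₁ / sqDist x₀ x * (if i = j then (1:ℝ) else 0)
      + -4 * C₁ / sqDist x₀ x ^ 2 * (x i - x₀ i) * (x j - x₀ j) := by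
  have hS := (sqDist_pos hx).ne'
  have heq : pd j ψ =ᶠ[𝓝 x] fun y => 2 * C₁ * ((y j - x₀ j) * (sqDist x₀ y)⁻¹) := by
    filter_upwards [isOpen_ne.mem_nhds hx] with y hy
    rw [pd_of_eq_log_sqDist hψ hy]
    ring
  have hderiv := (((hasFDerivAt_apply j x).sub_const (x₀ j)).fun_mul
    ((hasDerivAt_inv hS).comp_hasFDerivAt x (hasFDerivAt_sqDist x₀ x))).const_mul (2 * C₁)
  rw [pd2, pd_eq_of_eventuallyEq_of_hasFDerivAt heq hderiv]
  simp only [smul_apply, add_apply, sum_smul_proj_single, smul_eq_mul, Function.comp_apply,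
    ContinuousLinearMap.proj_apply, Pi.single_apply]
  rcases eq_or_ne i j with rfl | hij
  · simp only [if_true]
    field_simp
    ring
  · simp only [if_neg hij, if_neg hij.symm]
    field_simp
    ring

end logSqDist

theorem log_solves_cubic_pde_general {n : ℕ} (C₀ C₁ : ℝ) (x₀ : Fin n → ℝ)
    (ψ : (Fin n → ℝ) → ℝ)
    (hψ : ∀ x, x ≠ x₀ → ψ x = C₀ + C₁ * Real.log (∑ k, (x k - x₀ k) ^ 2)) :
    ∀ x : Fin n → ℝ, x ≠ x₀ → ∀ i j : Fin n,
      (∑ k, pd k ψ x * pd k ψ x) * pd2 i j ψ x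
        + (∑ k, ∑ l, pd k ψ x * pd l ψ x * pd2 k l ψ x) * (if i = j then (1:ℝ) else 0)
      = pd i ψ x * (∑ k, pd2 j k ψ x * pd k ψ x)
        + pd j ψ x * (∑ k, pd2 i k ψ x * pd k ψ x) := by
  intro x hx i j
  have hS := (sqDist_pos hx).ne'
  refine cubic_identity_of_radial_derivatives (fun k => x k - x₀ k) _ _ (2 * C₁ / sqDist x₀ x)
    (2 * C₁ / sqDist x₀ x) (-4 * C₁ / sqDist x₀ x ^ 2) (pd_of_eq_log_sqDist hψ hx)
    (pd2_of_eq_log_sqDist hψ hx) ?_ i j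
  change 2 * (2 * C₁ / sqDist x₀ x) + -4 * C₁ / sqDist x₀ x ^ 2 * sqDist x₀ x = 0
  field_simp
  ring

/-- The function `ψ(x) = C₀ + C₁ · ln ‖x − x₀‖²` satisfies, away from `x₀`, the homogeneous
cubic PDE `∂ₖψ∂ₖψ ∂ᵢⱼψ + ∂ₖψ∂ₗψ∂ₖₗψ δᵢⱼ = ∂ᵢψ ∂ⱼₖψ∂ₖψ + ∂ⱼψ ∂ᵢₖψ∂ₖψ`. -/
theorem log_solves_cubic_pde {n : ℕ} (hn : 2 ≤ n) (C₀ C₁ : ℝ) (x₀ : Fin n → ℝ)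
    (ψ : (Fin n → ℝ) → ℝ)
    (hψ : ∀ x, x ≠ x₀ → ψ x = C₀ + C₁ * Real.log (∑ k, (x k - x₀ k) ^ 2)) :
    ∀ x : Fin n → ℝ, x ≠ x₀ → ∀ i j : Fin n,
      (∑ k, pd k ψ x * pd k ψ x) * pd2 i j ψ x
        + (∑ k, ∑ l, pd k ψ x * pd l ψ x * pd2 k l ψ x) * (if i = j then (1:ℝ) else 0)
      = pd i ψ x * (∑ k, pd2 j k ψ x * pd k ψ x)
        + pd j ψ x * (∑ k, pd2 i k ψ x * pd k ψ x) :=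
  log_solves_cubic_pde_general C₀ C₁ x₀ ψ hψ
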